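/- arXiv:2002.09076 — 2 statements merged into one kernel-verified Lean document; each statement's English description precedes it below -/
import Mathlib

section
/- In a generalized cardinal algebra A, the relation ≤ defined by a ≤ b iff there exists c with a + c = b is a partial order on A with least element 0. -/
/-- A generalized cardinal algebra (Tarski): a set with a partial binary `add`,
a constant `zero`, and a partial `ω`-ary `sum`, satisfying Tarski's axioms.
Partiality is encoded by definedness predicates `addDef` and `sumDef`. -/
structure GCA (α : Type*) where
  zero : α
  addDef : α → α → Prop
  add : α → α → α
  sumDef : (ℕ → α) → Prop
  sum : (ℕ → α) → α
  addDef_zero_right : ∀ a, addDef a zero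
  addDef_zero_left : ∀ a, addDef zero a
  add_zero : ∀ a, add a zero = a
  zero_add : ∀ a, add zero a = a
  sum_tail : ∀ s, sumDef s →
    sumDef (fun n => s (n + 1)) ∧ addDef (s 0) (sum (fun n => s (n + 1))) ∧
      sum s = add (s 0) (sum (fun n => s (n + 1)))
  sum_add : ∀ s t : ℕ → α, (∀ n, addDef (s n) (t n)) →
    sumDef (fun n => add (s n) (t n)) →
      sumDef s ∧ sumDef t ∧ addDef (sum s) (sum t) ∧
        sum (fun n => add (s n) (t n)) = add (sum s) (sum t)
  refinement : ∀ x y (c : ℕ → α), addDef x y → sumDef c → add x y = sum c →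
    ∃ s t : ℕ → α, sumDef s ∧ sumDef t ∧ sum s = x ∧ sum t = y ∧
      ∀ n, addDef (s n) (t n) ∧ add (s n) (t n) = c n
  remainder : ∀ s t : ℕ → α, (∀ n, addDef (t n) (s (n + 1)) ∧ s n = add (t n) (s (n + 1))) →
    ∃ c, ∀ n, sumDef (fun i => t (i + n)) ∧ addDef c (sum (fun i => t (i + n))) ∧
      s n = add c (sum (fun i => t (i + n)))

/-- The order induced by a GCA: `a ≤ b` iff `a + c = b` for some `c`. -/
def GCA.le {α : Type*} (A : GCA α) (a b : α) : Prop :=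
  ∃ c, A.addDef a c ∧ A.add a c = b

namespace GCA

private def cons {α : Type*} (x : α) (s : ℕ → α) : ℕ → α
  | 0 => x
  | n + 1 => s n

variable {α : Type*} (A : GCA α)

private def zs : ℕ → α := fun _ => A.zero

private lemma sumDef_of_chain (s t : ℕ → α)
    (h : ∀ n, A.addDef (t n) (s (n + 1)) ∧ s n = A.add (t n) (s (n + 1))) :
    A.sumDef t := by
  obtain ⟨c, hc⟩ := A.remainder s t h
  exact (hc 0).1

private lemma sum_cons (x : α) (s : ℕ → α) (h : A.sumDef (cons x s)) :
    A.sumDef s ∧ A.addDef x (A.sum s) ∧ A.sum (cons x s) = A.add x (A.sum s) := by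
  have h1 := A.sum_tail (cons x s) h
  exact h1

private lemma sum_zs : A.sum A.zs = A.zero := by
  obtain ⟨c, hc⟩ := A.remainder A.zs A.zs
    (fun n => ⟨A.addDef_zero_right _, (A.zero_add _).symm⟩)
  have hzc : A.zero = A.add c (A.sum A.zs) := (hc 0).2.2
  have hsc : A.sumDef (cons c A.zs) := by
    refine A.sumDef_of_chain (cons c A.zs) (cons c A.zs) ?_
    intro n
    match n with
    | 0 => exact ⟨A.addDef_zero_right _, (A.add_zero _).symm⟩
    | n + 1 => exact ⟨A.addDef_zero_right _, (A.add_zero _).symm⟩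
  have heq : (fun n => A.add (cons c A.zs n) (A.zs n)) = cons c A.zs := by
    funext n; exact A.add_zero _
  have hsa := A.sum_add (cons c A.zs) A.zs (fun n => A.addDef_zero_right _)
    (by rw [heq]; exact hsc)
  have hkey : A.sum (cons c A.zs) = A.add (A.sum (cons c A.zs)) (A.sum A.zs) := by
    have := hsa.2.2.2
    rwa [heq] at this
  have hval : A.sum (cons c A.zs) = A.zero := by
    have h2 := (A.sum_cons c A.zs hsc).2.2
    exact h2.trans hzc.symm
  rw [hval, A.zero_add] at hkey
  exact hkey.symm

private lemma comm (a b : α) (h : A.addDef a b) :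
    A.addDef b a ∧ A.add b a = A.add a b := by
  have hd : A.sumDef (cons a (cons b A.zs)) := by
    refine A.sumDef_of_chain (cons (A.add a b) (cons b A.zs)) (cons a (cons b A.zs)) ?_
    intro n
    match n with
    | 0 => exact ⟨h, rfl⟩
    | 1 => exact ⟨A.addDef_zero_right _, (A.add_zero _).symm⟩
    | n + 2 => exact ⟨A.addDef_zero_right _, (A.add_zero _).symm⟩
  obtain ⟨hd2, _, hsum1⟩ := A.sum_cons a _ hd
  obtain ⟨_, _, hsum2⟩ := A.sum_cons b A.zs hd2
  have hv : A.sum (cons a (cons b A.zs)) = A.add a b := by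
    rw [hsum1, hsum2, A.sum_zs, A.add_zero]
  have heq : (fun n => A.add (cons A.zero (cons b A.zs) n) (cons a A.zs n))
      = cons a (cons b A.zs) := by
    funext n
    match n with
    | 0 => exact A.zero_add a
    | 1 => exact A.add_zero b
    | n + 2 => exact A.add_zero _
  have hadds : ∀ n, A.addDef (cons A.zero (cons b A.zs) n) (cons a A.zs n) := by
    intro n
    match n with
    | 0 => exact A.addDef_zero_left a
    | 1 => exact A.addDef_zero_right b
    | n + 2 => exact A.addDef_zero_right _
  obtain ⟨hds1, hdt1, hadd12, hsum12⟩ := A.sum_add _ _ hadds (by rw [heq]; exact hd)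
  have hvs1 : A.sum (cons A.zero (cons b A.zs)) = b := by
    obtain ⟨hd', _, h1⟩ := A.sum_cons A.zero (cons b A.zs) hds1
    obtain ⟨_, _, h2⟩ := A.sum_cons b A.zs hd'
    rw [h1, h2, A.sum_zs, A.add_zero, A.zero_add]
  have hvt1 : A.sum (cons a A.zs) = a := by
    obtain ⟨_, _, h1⟩ := A.sum_cons a A.zs hdt1
    rw [h1, A.sum_zs, A.add_zero]
  rw [heq, hv, hvs1, hvt1] at hsum12
  rw [hvs1, hvt1] at hadd12
  exact ⟨hadd12, hsum12.symm⟩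

private lemma trans_core (a u v : α) (hau : A.addDef a u) (hbv : A.addDef (A.add a u) v) :
    ∃ w, A.addDef a w ∧ A.add a w = A.add (A.add a u) v := by
  obtain ⟨hua, huav⟩ := A.comm a u hau
  obtain ⟨hvb, hvbv⟩ := A.comm (A.add a u) v hbv
  have hd : A.sumDef (cons v (cons u (cons a A.zs))) := by
    refine A.sumDef_of_chain
      (cons (A.add (A.add a u) v) (cons (A.add a u) (cons a A.zs)))
      (cons v (cons u (cons a A.zs))) ?_
    intro n
    match n with
    | 0 => exact ⟨hvb, hvbv.symm⟩
    | 1 => exact ⟨hua, huav.symm⟩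
    | 2 => exact ⟨A.addDef_zero_right _, (A.add_zero _).symm⟩
    | n + 3 => exact ⟨A.addDef_zero_right _, (A.add_zero _).symm⟩
  obtain ⟨hd2, _, h1⟩ := A.sum_cons v _ hd
  obtain ⟨hd3, _, h2⟩ := A.sum_cons u _ hd2
  obtain ⟨_, _, h3⟩ := A.sum_cons a _ hd3
  have hv0 : A.sum (cons v (cons u (cons a A.zs))) = A.add (A.add a u) v := by
    rw [h1, h2, h3, A.sum_zs, A.add_zero, huav, hvbv]
  have heq : (fun n => A.add (cons A.zero (cons A.zero (cons a A.zs)) n)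
      (cons v (cons u A.zs) n)) = cons v (cons u (cons a A.zs)) := by
    funext n
    match n with
    | 0 => exact A.zero_add v
    | 1 => exact A.zero_add u
    | 2 => exact A.add_zero a
    | n + 3 => exact A.add_zero _
  have hadds : ∀ n, A.addDef (cons A.zero (cons A.zero (cons a A.zs)) n)
      (cons v (cons u A.zs) n) := by
    intro n
    match n with
    | 0 => exact A.addDef_zero_left v
    | 1 => exact A.addDef_zero_left u
    | 2 => exact A.addDef_zero_right a
    | n + 3 => exact A.addDef_zero_right _
  obtain ⟨hds1, hdt1, hadd12, hsum12⟩ := A.sum_add _ _ hadds (by rw [heq]; exact hd)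
  have hvs1 : A.sum (cons A.zero (cons A.zero (cons a A.zs))) = a := by
    obtain ⟨hd', _, k1⟩ := A.sum_cons A.zero (cons A.zero (cons a A.zs)) hds1
    obtain ⟨hd'', _, k2⟩ := A.sum_cons A.zero (cons a A.zs) hd'
    obtain ⟨_, _, k3⟩ := A.sum_cons a A.zs hd''
    rw [k1, k2, k3, A.sum_zs, A.add_zero, A.zero_add, A.zero_add]
  have hvt1 : A.sum (cons v (cons u A.zs)) = A.add v u := by
    obtain ⟨hd', _, k1⟩ := A.sum_cons v (cons u A.zs) hdt1
    obtain ⟨_, _, k2⟩ := A.sum_cons u A.zs hd'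
    rw [k1, k2, A.sum_zs, A.add_zero]
  rw [heq, hv0, hvs1, hvt1] at hsum12
  rw [hvs1, hvt1] at hadd12
  exact ⟨A.add v u, hadd12, hsum12.symm⟩

private lemma antisymm_core (a b x y : α) (hax : A.addDef a x) (hb : A.add a x = b)
    (hby : A.addDef b y) (ha : A.add b y = a) : a = b := by
  obtain ⟨hxa, hxab⟩ := A.comm a x hax
  obtain ⟨hyb, hyba⟩ := A.comm b y hby
  -- alternating chain
  have hchain : ∀ n, A.addDef ((fun n => if n % 2 = 0 then y else x) n)
      ((fun n => if n % 2 = 0 then a else b) (n + 1)) ∧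
      (fun n => if n % 2 = 0 then a else b) n =
        A.add ((fun n => if n % 2 = 0 then y else x) n)
          ((fun n => if n % 2 = 0 then a else b) (n + 1)) := by
    intro n
    rcases Nat.mod_two_eq_zero_or_one n with h | h
    · have h1 : (n + 1) % 2 = 1 := by omega
      simp only [h, h1]
      norm_num
      exact ⟨hyb, (hyba.trans ha).symm⟩
    · have h1 : (n + 1) % 2 = 0 := by omega
      simp only [h, h1]
      norm_num
      exact ⟨hxa, (hxab.trans hb).symm⟩
  obtain ⟨c, hc⟩ := A.remainder (fun n => if n % 2 = 0 then a else b)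
      (fun n => if n % 2 = 0 then y else x) hchain
  obtain ⟨hT0d, _, haT0⟩ := hc 0
  obtain ⟨hT1d, _, hbT1⟩ := hc 1
  have hs0 : (if 0 % 2 = 0 then a else b) = a := by norm_num
  have hs1 : (if 1 % 2 = 0 then a else b) = b := by norm_num
  rw [hs0] at haT0
  rw [hs1] at hbT1
  -- split the two tail sums
  have e0 : (fun i => (if (i + 0) % 2 = 0 then y else x))
      = fun n => A.add (if n % 2 = 0 then y else A.zero) (if n % 2 = 0 then A.zero else x) := by
    funext n
    rcases Nat.mod_two_eq_zero_or_one n with h | h <;> simp [h, A.add_zero, A.zero_add]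
  have e1 : (fun i => (if (i + 1) % 2 = 0 then y else x))
      = fun n => A.add (if n % 2 = 0 then x else A.zero) (if n % 2 = 0 then A.zero else y) := by
    funext n
    rcases Nat.mod_two_eq_zero_or_one n with h | h
    · have h1 : (n + 1) % 2 = 1 := by omega
      simp [h, h1, A.add_zero]
    · have h1 : (n + 1) % 2 = 0 := by omega
      simp [h, h1, A.zero_add]
  have hadd0 : ∀ n, A.addDef (if n % 2 = 0 then y else A.zero)
      (if n % 2 = 0 then A.zero else x) := by
    intro n
    rcases Nat.mod_two_eq_zero_or_one n with h | h <;> simp [h]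
    · exact A.addDef_zero_right y
    · exact A.addDef_zero_left x
  have hadd1 : ∀ n, A.addDef (if n % 2 = 0 then x else A.zero)
      (if n % 2 = 0 then A.zero else y) := by
    intro n
    rcases Nat.mod_two_eq_zero_or_one n with h | h <;> simp [h]
    · exact A.addDef_zero_right x
    · exact A.addDef_zero_left y
  obtain ⟨hdY0, hdX1, haddYX, hsumYX⟩ := A.sum_add _ _ hadd0 (by rw [← e0]; exact hT0d)
  obtain ⟨hdX0, hdY1, haddXY, hsumXY⟩ := A.sum_add _ _ hadd1 (by rw [← e1]; exact hT1d)
  -- shift lemmas: sum X1 = sum X0, sum Y1 = sum Y0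
  have eX : (fun n => (if (n + 1) % 2 = 0 then A.zero else x) : ℕ → α)
      = fun n => if n % 2 = 0 then x else A.zero := by
    funext n
    rcases Nat.mod_two_eq_zero_or_one n with h | h
    · have h1 : (n + 1) % 2 = 1 := by omega
      simp [h, h1]
    · have h1 : (n + 1) % 2 = 0 := by omega
      simp [h, h1]
  have eY : (fun n => (if (n + 1) % 2 = 0 then A.zero else y) : ℕ → α)
      = fun n => if n % 2 = 0 then y else A.zero := by
    funext n
    rcases Nat.mod_two_eq_zero_or_one n with h | h
    · have h1 : (n + 1) % 2 = 1 := by omega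
      simp [h, h1]
    · have h1 : (n + 1) % 2 = 0 := by omega
      simp [h, h1]
  have hX : A.sum (fun n => if n % 2 = 0 then A.zero else x)
      = A.sum (fun n => if n % 2 = 0 then x else A.zero) := by
    obtain ⟨_, _, k⟩ := A.sum_tail _ hdX1
    rw [eX] at k
    simpa [A.zero_add] using k
  have hY : A.sum (fun n => if n % 2 = 0 then A.zero else y)
      = A.sum (fun n => if n % 2 = 0 then y else A.zero) := by
    obtain ⟨_, _, k⟩ := A.sum_tail _ hdY1
    rw [eY] at k
    simpa [A.zero_add] using k
  -- T0 = T1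
  have hT0 : A.sum (fun i => (if (i + 0) % 2 = 0 then y else x))
      = A.add (A.sum (fun n => if n % 2 = 0 then y else A.zero))
          (A.sum (fun n => if n % 2 = 0 then x else A.zero)) := by
    rw [e0, hsumYX, hX]
  have hT1 : A.sum (fun i => (if (i + 1) % 2 = 0 then y else x))
      = A.add (A.sum (fun n => if n % 2 = 0 then x else A.zero))
          (A.sum (fun n => if n % 2 = 0 then y else A.zero)) := by
    rw [e1, hsumXY, hY]
  have haddYX' : A.addDef (A.sum (fun n => if n % 2 = 0 then y else A.zero))
      (A.sum (fun n => if n % 2 = 0 then x else A.zero)) := by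
    rwa [hX] at haddYX
  obtain ⟨_, hcomm⟩ := A.comm _ _ haddYX'
  have hTT : A.sum (fun i => (if (i + 0) % 2 = 0 then y else x))
      = A.sum (fun i => (if (i + 1) % 2 = 0 then y else x)) := by
    rw [hT0, hT1, hcomm]
  rw [haT0, hbT1, hTT]

end GCA

/-- In a GCA, the relation `a ≤ b` iff `∃ c, a + c = b` is a partial order
with least element `0`. -/
theorem GCA.le_partialOrder {α : Type*} (A : GCA α) :
    (∀ a, A.le a a) ∧
    (∀ a b c, A.le a b → A.le b c → A.le a c) ∧
    (∀ a b, A.le a b → A.le b a → a = b) ∧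
    (∀ a, A.le A.zero a) := by
  refine ⟨fun a => ⟨A.zero, A.addDef_zero_right a, A.add_zero a⟩, ?_, ?_,
    fun a => ⟨a, A.addDef_zero_left a, A.zero_add a⟩⟩
  · rintro a b c ⟨u, hu, rfl⟩ ⟨v, hv, rfl⟩
    obtain ⟨w, hw, hw2⟩ := A.trans_core a u v hu hv
    exact ⟨w, hw, hw2⟩
  · rintro a b ⟨x, hx, hxb⟩ ⟨y, hy, hya⟩
    exact A.antisymm_core a b x y hx hxb hy hya
end

section
/- Let A be a cancellative Γ-GCA with binary meets, for Γ a countable group, and let ∼ be an equivalence relation on A such that: (1) equidecomposable elements are ∼-related; (2) if a ∼ b and a + c ∼ b + d then c ∼ d; (3) if a ∼ b and a ∧ γb = 0 for every γ ∈ Γ, then a = 0. Then a ∼ b if and only if a and b are equidecomposable. -/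
open scoped NNReal

/-- A finite measure on a GCA `A`: a homomorphism `A → ℝ⁺`, where countable
sums in `ℝ⁺ = ℝ≥0` are convergent series. -/
def GCA.IsMeasure {α : Type*} (A : GCA α) (μ : α → ℝ≥0) : Prop :=
  μ A.zero = 0 ∧
  (∀ a b, A.addDef a b → μ (A.add a b) = μ a + μ b) ∧
  (∀ s : ℕ → α, A.sumDef s → HasSum (fun n => μ (s n)) (μ (A.sum s)))

/-- An action of a group `Γ` on a GCA `A`: a group action such that each map
`a ↦ γ a` is a GCA homomorphism. -/
def GCA.IsAction {α Γ : Type*} [Group Γ] (A : GCA α) (act : Γ → α → α) : Prop :=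
  (∀ a, act 1 a = a) ∧
  (∀ γ δ a, act γ (act δ a) = act (γ * δ) a) ∧
  (∀ γ : Γ,
    act γ A.zero = A.zero ∧
    (∀ a b, A.addDef a b →
      A.addDef (act γ a) (act γ b) ∧ act γ (A.add a b) = A.add (act γ a) (act γ b)) ∧
    (∀ s : ℕ → α, A.sumDef s →
      A.sumDef (fun n => act γ (s n)) ∧ act γ (A.sum s) = A.sum (fun n => act γ (s n))))

/-- `a` and `b` are equidecomposable with respect to an action of `Γ` on a GCA
`A` if there is a countable family `(c n)` with labels `(g n)` in `Γ` such
that `a = ∑ₙ c n` and `b = ∑ₙ (g n) • (c n)` (this is the statement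
`a = ∑_γ a_γ`, `b = ∑_γ γ a_γ`, with each `γ` allowed to label several
pieces). -/
def GCA.Equidecomposable {α Γ : Type*} [Group Γ] (A : GCA α) (act : Γ → α → α)
    (a b : α) : Prop :=
  ∃ (c : ℕ → α) (g : ℕ → Γ),
    A.sumDef c ∧ A.sum c = a ∧
    A.sumDef (fun n => act (g n) (c n)) ∧ A.sum (fun n => act (g n) (c n)) = b

/-- `m` is the meet (greatest lower bound) of `a` and `b` in the order of the
GCA `A`. -/
def GCA.IsMeet {α : Type*} (A : GCA α) (a b m : α) : Prop :=
  A.le m a ∧ A.le m b ∧ ∀ x, A.le x a → A.le x b → A.le x m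

namespace GCA

variable {α : Type*}

/-- Finite sequences padded with zeros. -/
def sq (A : GCA α) : List α → ℕ → α
  | [], _ => A.zero
  | a :: _, 0 => a
  | _ :: l, n + 1 => A.sq l n

lemma sq_nil (A : GCA α) (n : ℕ) : A.sq [] n = A.zero := rfl
lemma sq_cons_zero (A : GCA α) (a : α) (l : List α) : A.sq (a :: l) 0 = a := rfl
lemma sq_cons_succ (A : GCA α) (a : α) (l : List α) (n : ℕ) :
    A.sq (a :: l) (n + 1) = A.sq l n := rfl

lemma sq_tail (A : GCA α) (a : α) (l : List α) :
    (fun n => A.sq (a :: l) (n + 1)) = A.sq l := rfl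

lemma sq_eq_zero (A : GCA α) : ∀ (l : List α) (n : ℕ), l.length ≤ n → A.sq l n = A.zero
  | [], _, _ => rfl
  | _ :: _, 0, h => absurd h (by simp)
  | _ :: l, n + 1, h => A.sq_eq_zero l n (by simpa using h)

variable (A : GCA α)
variable (hc : ∀ a b, A.addDef a b → A.add a b = a → b = A.zero)

section
include hc

lemma sum_zeros :
    A.sumDef (fun _ => A.zero) ∧ A.sum (fun _ => A.zero) = A.zero := by
  obtain ⟨c, h⟩ := A.remainder (fun _ => A.zero) (fun _ => A.zero)
    (fun n => ⟨A.addDef_zero_right _, (A.zero_add _).symm⟩)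
  have hd : A.sumDef (fun _ => A.zero) := (h 0).1
  have hz : (fun _ : ℕ => A.add A.zero A.zero) = (fun _ : ℕ => A.zero) :=
    funext fun _ => A.zero_add _
  have h2 := A.sum_add (fun _ => A.zero) (fun _ => A.zero)
    (fun n => A.addDef_zero_right _) (by rw [hz]; exact hd)
  refine ⟨hd, hc _ _ h2.2.2.1 ?_⟩
  rw [← h2.2.2.2, hz]

/-- singleton sum -/
lemma sum_sq1 (a : α) : A.sumDef (A.sq [a]) ∧ A.sum (A.sq [a]) = a := by
  obtain ⟨c, h⟩ := A.remainder (A.sq [a]) (A.sq [a]) (by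
    intro n
    match n with
    | 0 => exact ⟨A.addDef_zero_right _, (A.add_zero _).symm⟩
    | n + 1 => exact ⟨A.addDef_zero_right _, (A.add_zero _).symm⟩)
  have htl : (fun i => A.sq [a] (i + 1)) = (fun _ => A.zero) := rfl
  have h1 := h 1
  rw [htl, (A.sum_zeros hc).2] at h1
  have hc0 : c = A.zero := by
    have := h1.2.2
    rw [A.add_zero] at this
    exact this.symm
  have h0 := h 0
  have h00 : (fun i => A.sq [a] (i + 0)) = A.sq [a] := rfl
  rw [h00, hc0] at h0
  refine ⟨h0.1, ?_⟩
  have := h0.2.2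
  rw [A.zero_add] at this
  exact this.symm

/-- binary sum -/
lemma sum_sq2 {a b : α} (hab : A.addDef a b) :
    A.sumDef (A.sq [a, b]) ∧ A.sum (A.sq [a, b]) = A.add a b := by
  obtain ⟨c, h⟩ := A.remainder (A.sq [A.add a b, b]) (A.sq [a, b]) (by
    intro n
    match n with
    | 0 => exact ⟨hab, rfl⟩
    | 1 => exact ⟨A.addDef_zero_right _, (A.add_zero _).symm⟩
    | n + 2 => exact ⟨A.addDef_zero_right _, (A.add_zero _).symm⟩)
  have htl : (fun i => A.sq [a, b] (i + 2)) = (fun _ => A.zero) := by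
    funext i
    exact A.sq_eq_zero [a, b] (i + 2) (by simp)
  have h2 := h 2
  rw [htl, (A.sum_zeros hc).2] at h2
  have hc0 : c = A.zero := by
    have h22 := h2.2.2
    rw [A.add_zero] at h22
    have : A.sq [A.add a b, b] 2 = A.zero := rfl
    rw [this] at h22
    exact h22.symm
  have h0 := h 0
  have h00 : (fun i => A.sq [a, b] (i + 0)) = A.sq [a, b] := rfl
  rw [h00, hc0] at h0
  refine ⟨h0.1, ?_⟩
  have h02 := h0.2.2
  rw [A.zero_add] at h02
  exact h02.symm

/-- commutativity -/
lemma add_comm' {a b : α} (hab : A.addDef a b) :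
    A.addDef b a ∧ A.add a b = A.add b a := by
  obtain ⟨hd2, hs2⟩ := A.sum_sq2 hc hab
  set s : ℕ → α := A.sq [A.zero, b] with hs
  set t : ℕ → α := A.sq [a] with ht
  have hpt : (fun n => A.add (s n) (t n)) = A.sq [a, b] := by
    funext n
    match n with
    | 0 => exact A.zero_add a
    | 1 => exact A.add_zero b
    | n + 2 =>
      show A.add A.zero A.zero = A.zero
      exact A.zero_add _
  have hdefs : ∀ n, A.addDef (s n) (t n) := by
    intro n
    match n with
    | 0 => exact A.addDef_zero_left a
    | 1 => exact A.addDef_zero_right b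
    | n + 2 => exact A.addDef_zero_right _
  have hsa := A.sum_add s t hdefs (by rw [hpt]; exact hd2)
  -- sum s = b
  have hss : A.sum s = b := by
    have hst := A.sum_tail s hsa.1
    have h1 : (fun n => s (n + 1)) = A.sq [b] := rfl
    have h2 : s 0 = A.zero := rfl
    rw [hst.2.2, h1, h2, A.zero_add, (A.sum_sq1 hc b).2]
  have hts : A.sum t = a := (A.sum_sq1 hc a).2
  have heq := hsa.2.2.2
  rw [hpt, hs2, hss, hts] at heq
  have hd := hsa.2.2.1
  rw [hss, hts] at hd
  exact ⟨hd, heq⟩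

/-- associativity, form 1 : from x + (y + z) to (x + y) + z -/
lemma add_assoc₁ {x y z : α} (hyz : A.addDef y z) (hx : A.addDef x (A.add y z)) :
    A.addDef x y ∧ A.addDef (A.add x y) z ∧
      A.add x (A.add y z) = A.add (A.add x y) z := by
  obtain ⟨c, h⟩ := A.remainder (A.sq [A.add x (A.add y z), A.add y z, z]) (A.sq [x, y, z]) (by
    intro n
    match n with
    | 0 => exact ⟨hx, rfl⟩
    | 1 => exact ⟨hyz, rfl⟩
    | 2 => exact ⟨A.addDef_zero_right _, (A.add_zero _).symm⟩
    | n + 3 => exact ⟨A.addDef_zero_right _, (A.add_zero _).symm⟩)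
  have htl : (fun i => A.sq [x, y, z] (i + 3)) = (fun _ => A.zero) := by
    funext i
    exact A.sq_eq_zero [x, y, z] (i + 3) (by simp)
  have h3 := h 3
  rw [htl, (A.sum_zeros hc).2] at h3
  have hc0 : c = A.zero := by
    have h32 := h3.2.2
    rw [A.add_zero] at h32
    exact h32.symm
  have h0 := h 0
  have h00 : (fun i => A.sq [x, y, z] (i + 0)) = A.sq [x, y, z] := rfl
  rw [h00, hc0] at h0
  have hsum3 : A.sum (A.sq [x, y, z]) = A.add x (A.add y z) := by
    have h02 := h0.2.2
    rw [A.zero_add] at h02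
    exact h02.symm
  -- now split as (x,y,0,...) + (0,0,z,0,...)
  set s : ℕ → α := A.sq [x, y] with hsdef
  set t : ℕ → α := A.sq [A.zero, A.zero, z] with htdef
  have hpt : (fun n => A.add (s n) (t n)) = A.sq [x, y, z] := by
    funext n
    match n with
    | 0 => exact A.add_zero x
    | 1 => exact A.add_zero y
    | 2 => exact A.zero_add z
    | n + 3 =>
      show A.add A.zero A.zero = A.zero
      exact A.zero_add _
  have hdefs : ∀ n, A.addDef (s n) (t n) := by
    intro n
    match n with
    | 0 => exact A.addDef_zero_right _
    | 1 => exact A.addDef_zero_right _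
    | 2 => exact A.addDef_zero_left _
    | n + 3 => exact A.addDef_zero_right _
  have hsa := A.sum_add s t hdefs (by rw [hpt]; exact h0.1)
  -- sum s = x + y, and addDef x y
  have hst := A.sum_tail s hsa.1
  have hs1 : (fun n => s (n + 1)) = A.sq [y] := rfl
  have hs0 : s 0 = x := rfl
  rw [hs1, hs0, (A.sum_sq1 hc y).2] at hst
  have hdxy : A.addDef x y := hst.2.1
  have hssum : A.sum s = A.add x y := hst.2.2
  -- sum t = z
  have htsum : A.sum t = z := by
    have ht1 := A.sum_tail t hsa.2.1
    have e1 : (fun n => t (n + 1)) = A.sq [A.zero, z] := rfl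
    have e0 : t 0 = A.zero := rfl
    rw [e1, e0, A.zero_add] at ht1
    have ht2 := A.sum_tail _ ht1.1
    have e2 : (fun n => A.sq [A.zero, z] (n + 1)) = A.sq [z] := rfl
    have e3 : A.sq [A.zero, z] 0 = A.zero := rfl
    rw [e2, e3, A.zero_add, (A.sum_sq1 hc z).2] at ht2
    rw [ht1.2.2, ht2.2.2]
  have heq := hsa.2.2.2
  rw [hpt, hsum3, hssum, htsum] at heq
  have hd := hsa.2.2.1
  rw [hssum, htsum] at hd
  exact ⟨hdxy, hd, heq⟩

/-- associativity, form 2 : from (x + y) + z to x + (y + z) -/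
lemma add_assoc₂ {x y z : α} (hxy : A.addDef x y) (hz : A.addDef (A.add x y) z) :
    A.addDef y z ∧ A.addDef x (A.add y z) ∧
      A.add (A.add x y) z = A.add x (A.add y z) := by
  obtain ⟨hd1, he1⟩ := A.add_comm' hc hz
  obtain ⟨hdzx, hdzxy, he2⟩ := A.add_assoc₁ hc hxy hd1
  obtain ⟨hdy, he4⟩ := A.add_comm' hc hdzxy
  obtain ⟨hdyz', hdyzx, he5⟩ := A.add_assoc₁ hc hdzx hdy
  obtain ⟨hdx, he6⟩ := A.add_comm' hc hdyzx
  refine ⟨hdyz', hdx, ?_⟩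
  rw [he1, he2, he4, he5, he6]


lemma le_trans' {a b c : α} (hab : A.le a b) (hbc : A.le b c) : A.le a c := by
  obtain ⟨u, hu, hu2⟩ := hab
  obtain ⟨v, hv, hv2⟩ := hbc
  rw [← hu2] at hv hv2
  obtain ⟨hduv, hda, he⟩ := A.add_assoc₂ hc hu hv
  exact ⟨A.add u v, hda, by rw [← he, hv2]⟩

lemma add_le_add_left' {m u y : α} (hmu : A.addDef m u) (hyu : A.le y u) :
    A.addDef m y ∧ A.le (A.add m y) (A.add m u) := by
  obtain ⟨v, hv, hv2⟩ := hyu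
  rw [← hv2] at hmu
  obtain ⟨hdmy, hd2, he⟩ := A.add_assoc₁ hc hv hmu
  exact ⟨hdmy, v, hd2, by rw [← he, hv2]⟩

lemma le_cancel' {m y : α} (hmy : A.addDef m y) (h : A.le (A.add m y) m) :
    A.le y A.zero := by
  obtain ⟨w, hw, hw2⟩ := h
  obtain ⟨hdyw, hdm, he⟩ := A.add_assoc₂ hc hmy hw
  rw [he] at hw2
  exact ⟨w, hdyw, hc _ _ hdm hw2⟩

omit hc in
lemma zero_le' (a : α) : A.le A.zero a := ⟨a, A.addDef_zero_left a, A.zero_add a⟩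

end
end GCA

/-- The main theorem: let `A` be a cancellative `Γ`-GCA with binary meets, for
`Γ` a countable group, and let `∼` be an equivalence relation on `A` such that
(1) equidecomposable elements are `∼`-related; (2) if `a ∼ b` and
`a + c ∼ b + d` then `c ∼ d`; (3) if `a ∼ b` and `a ∧ γ b = 0` for every
`γ ∈ Γ`, then `a = 0`. Then `a ∼ b` iff `a` and `b` are equidecomposable. -/
theorem GCA.main_equidecomposition {α Γ : Type*} [Group Γ] [Countable Γ]
    (A : GCA α) (act : Γ → α → α) (hact : A.IsAction act)
    (hcancel : ∀ a b, A.addDef a b → A.add a b = a → b = A.zero)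
    (hmeet : ∀ a b, ∃ m, A.IsMeet a b m)
    (sim : α → α → Prop) (hequiv : Equivalence sim)
    (h1 : ∀ a b, A.Equidecomposable act a b → sim a b)
    (h2 : ∀ a b c d, A.addDef a c → A.addDef b d → sim a b →
      sim (A.add a c) (A.add b d) → sim c d)
    (h3 : ∀ a b, sim a b → (∀ γ : Γ, A.IsMeet a (act γ b) A.zero) → a = A.zero)
    (a b : α) :
    sim a b ↔ A.Equidecomposable act a b := by

  constructor
  case mpr => exact h1 a b
  intro hsim
  classical
  have hNE : Nonempty Γ := ⟨1⟩
  obtain ⟨e, he⟩ := exists_surjective_nat Γ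
  -- action facts
  have act_zero : ∀ γ : Γ, act γ A.zero = A.zero := fun γ => (hact.2.2 γ).1
  have act_add : ∀ (γ : Γ) {x y : α}, A.addDef x y →
      A.addDef (act γ x) (act γ y) ∧ act γ (A.add x y) = A.add (act γ x) (act γ y) :=
    fun γ {x y} h => (hact.2.2 γ).2.1 x y h
  have act_act : ∀ (γ δ : Γ) (x : α), act γ (act δ x) = act (γ * δ) x := hact.2.1
  have act_inv : ∀ (γ : Γ) (x : α), act γ (act γ⁻¹ x) = x := by
    intro γ x; rw [act_act, mul_inv_cancel, hact.1]
  have act_le : ∀ (γ : Γ) {x y : α}, A.le x y → A.le (act γ x) (act γ y) := by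
    rintro γ x y ⟨u, hu, hu2⟩
    exact ⟨act γ u, (act_add γ hu).1, by rw [← (act_add γ hu).2, hu2]⟩
  -- one-piece equidecomposition
  have hsingle : ∀ (γ : Γ) (x : α), A.Equidecomposable act x (act γ x) := by
    intro γ x
    have h1' := A.sum_sq1 hcancel x
    have h2' := A.sum_sq1 hcancel (act γ x)
    have heqf : (fun n => act γ (A.sq [x] n)) = A.sq [act γ x] := by
      funext n
      match n with
      | 0 => rfl
      | n + 1 => exact act_zero γ
    exact ⟨A.sq [x], fun _ => γ, h1'.1, h1'.2,
      by rw [heqf]; exact h2'.1, by rw [heqf]; exact h2'.2⟩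
  -- meets and subtraction
  choose mf hmf using hmeet
  have hsub0 : ∀ x y : α, ∃ u, A.le x y → A.addDef x u ∧ A.add x u = y := by
    intro x y
    by_cases h : A.le x y
    · obtain ⟨u, hu⟩ := h; exact ⟨u, fun _ => hu⟩
    · exact ⟨A.zero, fun h' => absurd h' h⟩
  choose sub hsub using hsub0
  -- the recursive construction
  let step : ℕ → α × α → α × α := fun n p =>
    (sub (mf p.1 (act (e n) p.2)) p.1,
     act (e n)⁻¹ (sub (mf p.1 (act (e n) p.2)) (act (e n) p.2)))
  let pr : ℕ → α × α := fun n => Nat.rec (a, b) step n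
  let as : ℕ → α := fun n => (pr n).1
  let bs : ℕ → α := fun n => (pr n).2
  let cs : ℕ → α := fun n => mf (as n) (act (e n) (bs n))
  let ds : ℕ → α := fun n => act (e n)⁻¹ (cs n)
  let zs : ℕ → α := fun n => sub (cs n) (act (e n) (bs n))
  have hmn : ∀ n, A.IsMeet (as n) (act (e n) (bs n)) (cs n) := fun n => hmf _ _
  have haddA : ∀ n, A.addDef (cs n) (as (n + 1)) ∧ A.add (cs n) (as (n + 1)) = as n := by
    intro n
    have : as (n + 1) = sub (cs n) (as n) := rfl
    rw [this]
    exact hsub _ _ (hmn n).1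
  have hz : ∀ n, A.addDef (cs n) (zs n) ∧ A.add (cs n) (zs n) = act (e n) (bs n) :=
    fun n => hsub _ _ (hmn n).2.1
  have hbS : ∀ n, bs (n + 1) = act (e n)⁻¹ (zs n) := fun n => rfl
  have haddB : ∀ n, A.addDef (ds n) (bs (n + 1)) ∧ A.add (ds n) (bs (n + 1)) = bs n := by
    intro n
    have h' := act_add (e n)⁻¹ (hz n).1
    refine ⟨h'.1, ?_⟩
    have hb : bs n = act (e n)⁻¹ (act (e n) (bs n)) := by
      rw [act_act, inv_mul_cancel, hact.1]
    rw [hb, ← (hz n).2, h'.2]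
  have hsimn : ∀ n, sim (as n) (bs n) := by
    intro n
    induction n with
    | zero => exact hsim
    | succ n ih =>
      have hcd : sim (cs n) (ds n) := h1 _ _ (hsingle (e n)⁻¹ (cs n))
      exact h2 _ _ _ _ (haddA n).1 (haddB n).1 hcd
        (by rw [(haddA n).2, (haddB n).2]; exact ih)
  obtain ⟨r, hr⟩ := A.remainder as cs (fun n => ⟨(haddA n).1, ((haddA n).2).symm⟩)
  obtain ⟨r', hr'⟩ := A.remainder bs ds (fun n => ⟨(haddB n).1, ((haddB n).2).symm⟩)
  have hcs0 : (fun i => cs (i + 0)) = cs := rfl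
  have hds0 : (fun i => ds (i + 0)) = ds := rfl
  have hr0 := hr 0
  rw [hcs0] at hr0
  have hr'0 := hr' 0
  rw [hds0] at hr'0
  -- sim (sum cs) (sum ds)
  have hSS' : sim (A.sum cs) (A.sum ds) := by
    refine h1 _ _ ⟨cs, fun n => (e n)⁻¹, hr0.1, rfl, ?_, ?_⟩
    · exact hr'0.1
    · rfl
  -- sim r r'
  have hab1 : a = A.add r (A.sum cs) := hr0.2.2
  have hb1 : b = A.add r' (A.sum ds) := hr'0.2.2
  obtain ⟨hdSr, hcomm1⟩ := A.add_comm' hcancel hr0.2.1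
  obtain ⟨hdS'r', hcomm2⟩ := A.add_comm' hcancel hr'0.2.1
  have hab2 : a = A.add (A.sum cs) r := by rw [hab1, hcomm1]
  have hb2 : b = A.add (A.sum ds) r' := by rw [hb1, hcomm2]
  have hrr' : sim r r' := h2 _ _ _ _ hdSr hdS'r' hSS'
    (by rw [← hab2, ← hb2]; exact hsim)
  -- remainders below every stage
  have hrle : ∀ n, A.le r (as (n + 1)) :=
    fun n => ⟨_, (hr (n + 1)).2.1, ((hr (n + 1)).2.2).symm⟩
  have hr'le : ∀ n, A.le r' (bs (n + 1)) :=
    fun n => ⟨_, (hr' (n + 1)).2.1, ((hr' (n + 1)).2.2).symm⟩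
  -- the meets of r with all translates of r' vanish
  have hmz : ∀ γ : Γ, A.IsMeet r (act γ r') A.zero := by
    intro γ
    obtain ⟨n, hn⟩ := he γ
    subst hn
    refine ⟨A.zero_le' r, A.zero_le' _, ?_⟩
    intro y hyr hyr'
    have hy1 : A.le y (as (n + 1)) := A.le_trans' hcancel hyr (hrle n)
    have hbz : act (e n) (bs (n + 1)) = zs n := act_inv (e n) (zs n)
    have hy2 : A.le y (zs n) :=
      A.le_trans' hcancel hyr' (hbz ▸ act_le (e n) (hr'le n))
    have hA := A.add_le_add_left' hcancel (haddA n).1 hy1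
    have hB := A.add_le_add_left' hcancel (hz n).1 hy2
    have hle1 : A.le (A.add (cs n) y) (as n) := (haddA n).2 ▸ hA.2
    have hle2 : A.le (A.add (cs n) y) (act (e n) (bs n)) := (hz n).2 ▸ hB.2
    have hlem := (hmn n).2.2 _ hle1 hle2
    exact A.le_cancel' hcancel hA.1 hlem
  have hrz : r = A.zero := h3 r r' hrr' hmz
  have hmz' : ∀ γ : Γ, A.IsMeet r' (act γ r) A.zero := by
    intro γ
    rw [hrz, act_zero]
    exact ⟨A.zero_le' r', A.zero_le' _, fun x _ h => h⟩
  have hr'z : r' = A.zero := h3 r' r (hequiv.symm hrr') hmz'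
  refine ⟨cs, fun n => (e n)⁻¹, hr0.1, ?_, hr'0.1, ?_⟩
  · rw [hab1, hrz, A.zero_add]
  · show A.sum ds = b
    rw [hb1, hr'z, A.zero_add]
end
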